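/- arXiv:1909.03624 — 11 statements merged into one kernel-verified Lean document; each statement's English description precedes it below -/
import Mathlib

section
/- Let b : ℝ → ℝ be C² on [0,∞) with b(0)=0 and b'(x) ≥ 0, H(x) = ∫₀ˣ b'(t)/√(1+b'(t)²) dt, w_m¹(x) = H(x)/(1+b'(x)²), w_m²(x) = b'(x)·w_m¹(x), and w_p(x) = (b''(x)H(x) + b'(x)²√(1+b'(x)²))/(1+b'(x)²)^{3/2}. Then w_m²(0) = 0 and d/dx ( w_m²(x)·√(1+b'(x)²) ) = w_p(x) for all x ≥ 0. -/
noncomputable def rampDeriv (b : ℝ → ℝ) : ℝ → ℝ := fun x => derivWithin b (Set.Ici 0) x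

noncomputable def rampDeriv2 (b : ℝ → ℝ) : ℝ → ℝ := fun x => derivWithin (rampDeriv b) (Set.Ici 0) x

noncomputable def rampH (b : ℝ → ℝ) : ℝ → ℝ :=
  fun x => ∫ t in (0:ℝ)..x, rampDeriv b t / Real.sqrt (1 + rampDeriv b t ^ 2)

noncomputable def wP (b : ℝ → ℝ) : ℝ → ℝ := fun x =>
  (rampDeriv2 b x * rampH b x + rampDeriv b x ^ 2 * Real.sqrt (1 + rampDeriv b x ^ 2)) /
    (1 + rampDeriv b x ^ 2) ^ ((3:ℝ)/2)

noncomputable def wM1 (b : ℝ → ℝ) : ℝ → ℝ := fun x => rampH b x / (1 + rampDeriv b x ^ 2)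

noncomputable def wM2 (b : ℝ → ℝ) : ℝ → ℝ := fun x => rampDeriv b x * wM1 b x

theorem stmt_2 (b : ℝ → ℝ)
    (hb : ContDiffOn ℝ 2 b (Set.Ici (0:ℝ)))
    (hb0 : b 0 = 0)
    (hb' : ∀ x ≥ (0:ℝ), 0 ≤ rampDeriv b x) :
    wM2 b 0 = 0 ∧
    ∀ x ≥ (0:ℝ),
      HasDerivWithinAt (fun t => wM2 b t * Real.sqrt (1 + rampDeriv b t ^ 2))
        (wP b x) (Set.Ici 0) x := by
  set g := rampDeriv b with hgdef
  have hg1 : ContDiffOn ℝ 1 g (Set.Ici 0) :=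
    hb.derivWithin (uniqueDiffOn_Ici 0) (by norm_num)
  have hgc : ContinuousOn g (Set.Ici 0) := hg1.continuousOn
  have hq : ∀ t : ℝ, (0:ℝ) < 1 + g t ^ 2 := fun t => by positivity
  have hsq : ∀ t : ℝ, (0:ℝ) < Real.sqrt (1 + g t ^ 2) := fun t => Real.sqrt_pos.mpr (hq t)
  have hφc : ContinuousOn (fun t => g t / Real.sqrt (1 + g t ^ 2)) (Set.Ici 0) := by
    apply hgc.div
    · exact (continuousOn_const.add (hgc.pow 2)).sqrt
    · exact fun t _ => (hsq t).ne'
  constructor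
  · simp [wM2, wM1, rampH, intervalIntegral.integral_same]
  · intro x hx
    have hgd : HasDerivWithinAt g (rampDeriv2 b x) (Set.Ici 0) x :=
      ((hg1.differentiableOn one_ne_zero) x hx).hasDerivWithinAt
    have hHd : HasDerivWithinAt (rampH b) (g x / Real.sqrt (1 + g x ^ 2)) (Set.Ici 0) x := by
      have hint : IntervalIntegrable (fun t => g t / Real.sqrt (1 + g t ^ 2))
          MeasureTheory.volume 0 x := by
        apply (hφc.mono _).intervalIntegrable
        rw [Set.uIcc_of_le hx]
        exact Set.Icc_subset_Ici_self
      rcases eq_or_lt_of_le hx with rfl | h0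
      · exact intervalIntegral.integral_hasDerivWithinAt_right hint
          ⟨Set.Ici 0, nhdsWithin_mono 0 Set.Ioi_subset_Ici_self self_mem_nhdsWithin,
            hφc.aestronglyMeasurable measurableSet_Ici⟩
          ((hφc 0 (by simp)).mono Set.Ioi_subset_Ici_self)
      · have hmem : Set.Ici (0:ℝ) ∈ nhds x := Ici_mem_nhds h0
        have := intervalIntegral.integral_hasDerivAt_right hint
          ⟨Set.Ici 0, hmem, hφc.aestronglyMeasurable measurableSet_Ici⟩
          ((hφc x hx).continuousAt hmem)
        exact this.hasDerivWithinAt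
    have hqd : HasDerivWithinAt (fun t => 1 + g t ^ 2)
        (2 * g x * rampDeriv2 b x) (Set.Ici 0) x := by
      have := ((hgd.pow 2).const_add 1)
      simpa [mul_comm, mul_assoc, mul_left_comm] using this
    have hsd : HasDerivWithinAt (fun t => Real.sqrt (1 + g t ^ 2))
        (2 * g x * rampDeriv2 b x / (2 * Real.sqrt (1 + g x ^ 2))) (Set.Ici 0) x :=
      hqd.sqrt (hq x).ne'
    have hM1 : HasDerivWithinAt (wM1 b)
        ((g x / Real.sqrt (1 + g x ^ 2) * (1 + g x ^ 2) -
          rampH b x * (2 * g x * rampDeriv2 b x)) / (1 + g x ^ 2) ^ 2)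
        (Set.Ici 0) x := hHd.div hqd (hq x).ne'
    have hM2 : HasDerivWithinAt (wM2 b)
        (rampDeriv2 b x * wM1 b x +
          g x * ((g x / Real.sqrt (1 + g x ^ 2) * (1 + g x ^ 2) -
            rampH b x * (2 * g x * rampDeriv2 b x)) / (1 + g x ^ 2) ^ 2))
        (Set.Ici 0) x := hgd.mul hM1
    have hfull : HasDerivWithinAt (fun t => wM2 b t * Real.sqrt (1 + g t ^ 2)) _ (Set.Ici 0) x :=
      hM2.mul hsd
    convert hfull using 1
    have hs := hsq x
    have hs2 : Real.sqrt (1 + g x ^ 2) ^ 2 = 1 + g x ^ 2 := Real.sq_sqrt (hq x).le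
    have hrpow : (1 + g x ^ 2) ^ ((3:ℝ)/2) =
        (1 + g x ^ 2) * Real.sqrt (1 + g x ^ 2) := by
      rw [show (3:ℝ)/2 = 1 + 1/2 by norm_num, Real.rpow_add (hq x), Real.rpow_one,
        Real.sqrt_eq_rpow]
    simp only [wP, wM1, wM2, ← hgdef]
    rw [hrpow]
    set s := Real.sqrt (1 + g x ^ 2) with hsdef
    rw [← hs2]
    field_simp
    linear_combination (-rampDeriv2 b x * rampH b x) * hs2
end

section
/- Fix constants x* > 0, b* = b(x*) > 0, β = b'(x*) ≥ 0, and A = H(x*)/√(1+b'(x*)²) > 0. Let p ∈ (0,1). Then the initial value problem p(x−x*) + βA = s'(x)·[(1−p)(s(x)−b*) + A], s(x*) = b*, has the explicit solution s(x) = √Δ/(1−p) + b* − A/(1−p), where Δ = (1−p)p(x−x*)² + 2(1−p)Aβ(x−x*) + A², and Δ > 0 for all x ≥ x*, so s is defined on [x*,∞). -/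
theorem stmt_5 (xs bs beta A p : ℝ)
    (hxs : 0 < xs) (hbs : 0 < bs) (hbeta : 0 ≤ beta) (hA : 0 < A)
    (hp : p ∈ Set.Ioo (0:ℝ) 1) :
    let Δ : ℝ → ℝ := fun x => (1-p)*p*(x-xs)^2 + 2*(1-p)*A*beta*(x-xs) + A^2
    let s : ℝ → ℝ := fun x => Real.sqrt (Δ x) / (1-p) + bs - A/(1-p)
    s xs = bs ∧
    (∀ x ≥ xs, 0 < Δ x) ∧
    (∀ x ≥ xs, ∃ d : ℝ, HasDerivAt s d x ∧
      p*(x-xs) + beta*A = d * ((1-p)*(s x - bs) + A)) := by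
  obtain ⟨hp0, hp1⟩ := hp
  have h1p : (0:ℝ) < 1 - p := by linarith
  intro Δ s
  have hΔpos : ∀ x ≥ xs, 0 < Δ x := by
    intro x hx
    have h1 : 0 ≤ (1-p)*p*(x-xs)^2 := by positivity
    have h2 : 0 ≤ 2*(1-p)*A*beta*(x-xs) := by
      have : 0 ≤ x - xs := by linarith
      positivity
    have h3 : 0 < A^2 := by positivity
    simp only [Δ]; linarith
  have hsxs : s xs = bs := by
    simp only [s, Δ, sub_self]
    rw [show (1-p)*p*(0:ℝ)^2 + 2*(1-p)*A*beta*0 + A^2 = A^2 by ring,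
      Real.sqrt_sq hA.le]
    field_simp
    ring
  refine ⟨hsxs, hΔpos, ?_⟩
  intro x hx
  have hΔx := hΔpos x hx
  have hsq : 0 < Real.sqrt (Δ x) := Real.sqrt_pos.mpr hΔx
  -- derivative of Δ
  have hΔd : HasDerivAt Δ (2*(1-p)*(p*(x-xs) + A*beta)) x := by
    have : HasDerivAt (fun y => (1-p)*p*(y-xs)^2 + 2*(1-p)*A*beta*(y-xs) + A^2)
        ((1-p)*p*(2*(x-xs)) + 2*(1-p)*A*beta) x := by
      have h1 : HasDerivAt (fun y : ℝ => y - xs) 1 x :=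
        (hasDerivAt_id x).sub_const xs
      have h2 : HasDerivAt (fun y : ℝ => (y-xs)^2) (2*(x-xs)) x := by
        simpa using h1.fun_pow 2
      simpa using (((h2.const_mul ((1-p)*p)).add (h1.const_mul (2*(1-p)*A*beta))).add_const (A^2))
    convert this using 1
    ring
  have hsqd : HasDerivAt (fun y => Real.sqrt (Δ y))
      (2*(1-p)*(p*(x-xs) + A*beta) / (2 * Real.sqrt (Δ x))) x :=
    (Real.hasDerivAt_sqrt (ne_of_gt hΔx)).comp x hΔd |>.congr_deriv (by ring)
  set d : ℝ := (p*(x-xs) + A*beta) / Real.sqrt (Δ x) with hd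
  have hsd : HasDerivAt s d x := by
    have := (hsqd.div_const (1-p)).add_const bs |>.sub_const (A/(1-p))
    refine this.congr_deriv ?_
    rw [hd]
    field_simp
  refine ⟨d, hsd, ?_⟩
  have hrhs : (1-p)*(s x - bs) + A = Real.sqrt (Δ x) := by
    simp only [s]
    field_simp
    ring
  rw [hrhs, hd, div_mul_cancel₀ _ (ne_of_gt hsq)]
  ring
end

section
/- With x* > 0, b* > 0, β ≥ 0, A > 0, if p = β²/(1+β²) then the function s(x) = β(x−x*) + b* solves p(x−x*) + βA = s'(x)·[(1−p)(s(x)−b*) + A] with s(x*) = b*. -/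
theorem stmt_7 (xs bs beta A : ℝ)
    (hxs : 0 < xs) (hbs : 0 < bs) (hbeta : 0 ≤ beta) (hA : 0 < A)
    (p : ℝ) (hp : p = beta^2 / (1 + beta^2)) :
    let s : ℝ → ℝ := fun x => beta*(x-xs) + bs
    s xs = bs ∧
    ∀ x : ℝ, HasDerivAt s beta x ∧
      p*(x-xs) + beta*A = beta * ((1-p)*(s x - bs) + A) := by
  intro s
  have h1 : (1 : ℝ) + beta^2 ≠ 0 := by positivity
  constructor
  · simp [s]
  · intro x
    constructor
    · have : HasDerivAt (fun x => beta*(x-xs) + bs) (beta * 1) x := by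
        exact ((hasDerivAt_id x).sub_const xs).const_mul beta |>.add_const bs
      simpa [s] using this
    · simp only [s]
      rw [hp]
      field_simp
      ring
end

section
/- Fix x* ∈ ℝ, b* > 0, β ≥ 0, A > 0 and p > 1. Every solution (x(t), y(t)) of the system [p(x−x*) + βA] x' = y' [(1−p)(y−b*) + A] with y(t*) = b*, x(t*) = x* lies on the ellipse p·[x − x* + βA/p]² + (p−1)·[y − b* − A/(p−1)]² = (β²/p + 1/(p−1))·A². -/
/-!
The quadratic `ellipseIntegral` is a first integral of the system: since
`p (x - x* + βA/p) = p (x - x*) + βA` and `(p - 1)(y - b* - A/(p - 1)) = -((1 - p)(y - b*) + A)`,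
its derivative along a solution is twice the difference of the two sides of the equation, hence
zero. So it keeps its value at `(x*, b*)`.
-/

namespace FreeLayer

variable (xs bs beta A p : ℝ)

noncomputable def ellipseIntegral (X Y : ℝ) : ℝ :=
  p * (X - xs + beta * A / p) ^ 2 + (p - 1) * (Y - bs - A / (p - 1)) ^ 2

variable {xs bs beta A p}

theorem ellipseIntegral_center (hp : p ≠ 0) (hp1 : p - 1 ≠ 0) :
    ellipseIntegral xs bs beta A p xs bs = (beta ^ 2 / p + 1 / (p - 1)) * A ^ 2 := by
  unfold ellipseIntegral
  field_simp
  ring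

theorem hasDerivAt_ellipseIntegral_comp (hp : p ≠ 0) (hp1 : p - 1 ≠ 0)
    {x y : ℝ → ℝ} {x' y' t : ℝ} (hx : HasDerivAt x x' t) (hy : HasDerivAt y y' t) :
    HasDerivAt (fun s => ellipseIntegral xs bs beta A p (x s) (y s))
      (2 * ((p * (x t - xs) + beta * A) * x' - y' * ((1 - p) * (y t - bs) + A))) t := by
  have hX := (((hx.sub_const xs).add_const (beta * A / p)).fun_pow 2).const_mul p
  have hY := (((hy.sub_const bs).sub_const (A / (p - 1))).fun_pow 2).const_mul (p - 1)
  refine (hX.add hY).congr_deriv ?_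
  norm_num
  field_simp
  ring

end FreeLayer

open FreeLayer in
theorem stmt_10_general (xs bs beta A p : ℝ) (ts : ℝ)
    (hp : 1 < p)
    (x y x' y' : ℝ → ℝ)
    (hx : ∀ t, HasDerivAt x (x' t) t) (hy : ∀ t, HasDerivAt y (y' t) t)
    (hode : ∀ t, (p*(x t - xs) + beta*A) * x' t = y' t * ((1-p)*(y t - bs) + A))
    (hxts : x ts = xs) (hyts : y ts = bs) :
    ∀ t : ℝ,
      p * (x t - xs + beta*A/p)^2 + (p-1) * (y t - bs - A/(p-1))^2
        = (beta^2/p + 1/(p-1)) * A^2 := by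
  have hp0 : p ≠ 0 := by positivity
  have hp1 : p - 1 ≠ 0 := sub_ne_zero.mpr hp.ne'
  have hderiv (t : ℝ) :
      HasDerivAt (fun s => ellipseIntegral xs bs beta A p (x s) (y s)) 0 t := by
    have h := hasDerivAt_ellipseIntegral_comp (xs := xs) (bs := bs) (beta := beta) (A := A)
      hp0 hp1 (hx t) (hy t)
    rwa [hode t, sub_self, mul_zero] at h
  intro t
  have hconst := is_const_of_deriv_eq_zero (fun s => (hderiv s).differentiableAt)
    (fun s => (hderiv s).deriv) t ts
  rw [hxts, hyts, ellipseIntegral_center hp0 hp1] at hconst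
  exact hconst

theorem stmt_10 (xs bs beta A p : ℝ) (ts : ℝ)
    (hbs : 0 < bs) (hbeta : 0 ≤ beta) (hA : 0 < A) (hp : 1 < p)
    (x y x' y' : ℝ → ℝ)
    (hx : ∀ t, HasDerivAt x (x' t) t) (hy : ∀ t, HasDerivAt y (y' t) t)
    (hode : ∀ t, (p*(x t - xs) + beta*A) * x' t = y' t * ((1-p)*(y t - bs) + A))
    (hxts : x ts = xs) (hyts : y ts = bs) :
    ∀ t : ℝ,
      p * (x t - xs + beta*A/p)^2 + (p-1) * (y t - bs - A/(p-1))^2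
        = (beta^2/p + 1/(p-1)) * A^2 :=
  stmt_10_general xs bs beta A p ts hp x y x' y' hx hy hode hxts hyts
end

section
/- With x* ∈ ℝ, b* > 0, β ≥ 0, A > 0 and p > 1, the right-most point of the ellipse p[x − x* + βA/p]² + (p−1)[y − b* − A/(p−1)]² = (β²/p + 1/(p−1))A² passing through (x*, b*) has coordinates x△ = x* + (A/p)(√(β² + p/(p−1)) − β) and y△ = b* + A/(p−1); in particular x△ > x*. -/
theorem stmt_11 (xs bs beta A p : ℝ)
    (hbs : 0 < bs) (hbeta : 0 ≤ beta) (hA : 0 < A) (hp : 1 < p) :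
    let xd : ℝ := xs + (A/p) * (Real.sqrt (beta^2 + p/(p-1)) - beta)
    let yd : ℝ := bs + A/(p-1)
    (p * (xd - xs + beta*A/p)^2 + (p-1) * (yd - bs - A/(p-1))^2
        = (beta^2/p + 1/(p-1)) * A^2) ∧
    (∀ x y : ℝ,
      p * (x - xs + beta*A/p)^2 + (p-1) * (y - bs - A/(p-1))^2
        = (beta^2/p + 1/(p-1)) * A^2 → x ≤ xd) ∧
    xs < xd := by
  intro xd yd
  have hp0 : (0:ℝ) < p := by linarith
  have hp1 : (0:ℝ) < p - 1 := by linarith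
  have harg : (0:ℝ) ≤ beta^2 + p/(p-1) := by positivity
  set s := Real.sqrt (beta^2 + p/(p-1)) with hs
  have hs0 : 0 ≤ s := Real.sqrt_nonneg _
  have hssq : s^2 = beta^2 + p/(p-1) := Real.sq_sqrt harg
  have hbs2 : beta^2 < s^2 := by
    rw [hssq]; have : 0 < p/(p-1) := by positivity
    linarith
  have hbls : beta < s := by nlinarith
  have hkey : xd - xs + beta*A/p = A*s/p := by
    show xs + (A/p) * (s - beta) - xs + beta*A/p = A*s/p
    field_simp; ring
  have hval : p * (A*s/p)^2 = (beta^2/p + 1/(p-1)) * A^2 := by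
    have hp0' : p ≠ 0 := ne_of_gt hp0
    have hp1' : p - 1 ≠ 0 := ne_of_gt hp1
    have h : (A*s/p)^2 = A^2 * s^2 / p^2 := by ring
    rw [h, hssq]
    field_simp
  refine ⟨?_, ?_, ?_⟩
  · rw [hkey]
    have hy : yd - bs - A/(p-1) = 0 := by simp [yd]
    rw [hy]
    simpa using hval
  · intro x y hxy
    have h1 : (p-1) * (y - bs - A/(p-1))^2 ≥ 0 := by positivity
    have h2 : p * (x - xs + beta*A/p)^2 ≤ p * (A*s/p)^2 := by linarith
    have h3 : (x - xs + beta*A/p)^2 ≤ (A*s/p)^2 :=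
      le_of_mul_le_mul_left h2 hp0
    have hY : 0 ≤ A*s/p := by positivity
    have h4 : x - xs + beta*A/p ≤ A*s/p := by nlinarith
    show x ≤ xs + (A/p) * (s - beta)
    have hr : (A/p) * (s - beta) = A*s/p - beta*A/p := by ring
    rw [hr]
    have hk2 : xd - xs + beta*A/p = A*s/p := hkey
    linarith
  · have hpos : 0 < (A/p) * (s - beta) := by
      apply mul_pos (by positivity); linarith
    show xs < xs + (A/p) * (s - beta)
    linarith
end

section
/- Let x* ∈ ℝ, b* > 0, β ≥ 0, A > 0, and let ρ̲, u̲, v̲ > 0 satisfy ρ̲ u̲² = 1 and v̲/u̲ ≥ β. Then the function s(x) = [ρ̲v̲²(x−x*)² + 2(ρ̲u̲v̲ b* + βA)(x−x*) + 2b*A] / [2ρ̲u̲v̲(x−x*) + 2A] is defined for all x ≥ x*, satisfies s(x*) = b*, and solves ρ̲v̲²(x−x*) − ρ̲u̲v̲(s(x)−b*) + βA = s'(x)·[ρ̲u̲v̲(x−x*) + A]. -/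
theorem stmt_12 (xs bs beta A rho u v : ℝ)
    (hbs : 0 < bs) (hbeta : 0 ≤ beta) (hA : 0 < A)
    (hrho : 0 < rho) (hu : 0 < u) (hv : 0 < v)
    (hru : rho * u^2 = 1) (hslope : beta ≤ v/u) :
    let s : ℝ → ℝ := fun x =>
      (rho*v^2*(x-xs)^2 + 2*(rho*u*v*bs + beta*A)*(x-xs) + 2*bs*A) /
        (2*rho*u*v*(x-xs) + 2*A)
    (∀ x ≥ xs, 0 < 2*rho*u*v*(x-xs) + 2*A) ∧
    s xs = bs ∧
    (∀ x ≥ xs, ∃ d : ℝ, HasDerivAt s d x ∧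
      rho*v^2*(x-xs) - rho*u*v*(s x - bs) + beta*A = d * (rho*u*v*(x-xs) + A)) := by
  intro s
  have hpos : ∀ x ≥ xs, 0 < 2*rho*u*v*(x-xs) + 2*A := by
    intro x hx
    have h1 : 0 ≤ 2*rho*u*v*(x-xs) := mul_nonneg (by positivity) (by linarith)
    linarith
  refine ⟨hpos, ?_, ?_⟩
  · show (rho*v^2*(xs-xs)^2 + 2*(rho*u*v*bs + beta*A)*(xs-xs) + 2*bs*A) /
        (2*rho*u*v*(xs-xs) + 2*A) = bs
    have : (2:ℝ)*A ≠ 0 := by positivity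
    have hA0 : A ≠ 0 := ne_of_gt hA
    rw [div_eq_iff (by simp [hA0])]
    ring
  · intro x hx
    have hD : 2*rho*u*v*(x-xs) + 2*A ≠ 0 := ne_of_gt (hpos x hx)
    have hx1 : HasDerivAt (fun y : ℝ => y - xs) 1 x := (hasDerivAt_id x).sub_const xs
    have hN : HasDerivAt
        (fun y => rho*v^2*(y-xs)^2 + 2*(rho*u*v*bs + beta*A)*(y-xs) + 2*bs*A)
        (rho*v^2*(2*(x-xs)^1*1) + 2*(rho*u*v*bs + beta*A)*1) x := by
      exact (((hx1.pow 2).const_mul (rho*v^2)).add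
        ((hx1.const_mul (2*(rho*u*v*bs + beta*A))))).add_const _
    have hDd : HasDerivAt (fun y => 2*rho*u*v*(y-xs) + 2*A) (2*rho*u*v*1) x :=
      (hx1.const_mul (2*rho*u*v)).add_const _
    have hs := hN.div hDd hD
    refine ⟨_, hs, ?_⟩
    show rho*v^2*(x-xs) - rho*u*v*
      ((rho*v^2*(x-xs)^2 + 2*(rho*u*v*bs + beta*A)*(x-xs) + 2*bs*A) /
        (2*rho*u*v*(x-xs) + 2*A) - bs) + beta*A = _
    have hD' : rho*v*(x-xs)*u + A ≠ 0 := by intro h; apply hD; linear_combination 2*h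
    field_simp
    nlinarith [sq_nonneg (x-xs), hru, sq_nonneg u,
      mul_pos hrho hu, mul_pos hu hv]
end

section
/- Under the assumptions of the previous statement (ρ̲u̲² = 1, u̲, v̲ > 0, v̲/u̲ ≥ β ≥ 0, A > 0, b* > 0), the solution s satisfies 0 ≤ s'(x) ≤ v̲/u̲ for all x ≥ x*, and s(x)/x → v̲/(2u̲) as x → ∞. -/
open Filter Topology

lemma ratio_one (xs : ℝ) : Tendsto (fun x : ℝ => (x - xs)/x) atTop (nhds 1) := by
  have h : Tendsto (fun x : ℝ => 1 - xs * x⁻¹) atTop (nhds (1 - xs * 0)) :=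
    tendsto_const_nhds.sub (tendsto_inv_atTop_zero.const_mul xs)
  rw [mul_zero, sub_zero] at h
  refine h.congr' ?_
  filter_upwards [eventually_gt_atTop 0] with x hx
  field_simp

lemma auxN (xs a b c : ℝ) :
    Tendsto (fun x : ℝ => (a*(x-xs)^2 + b*(x-xs) + c)/x^2) atTop (nhds a) := by
  have h1 := ratio_one xs
  have h2 : Tendsto (fun x : ℝ => x⁻¹) atTop (nhds 0) := tendsto_inv_atTop_zero
  have h : Tendsto (fun x : ℝ => a*((x-xs)/x)^2 + b*((x-xs)/x * x⁻¹) + c*x⁻¹^2)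
      atTop (nhds (a*1^2 + b*(1*0) + c*0^2)) :=
    (((h1.pow 2).const_mul a).add (((h1.mul h2)).const_mul b)).add ((h2.pow 2).const_mul c)
  norm_num at h
  refine h.congr' ?_
  filter_upwards [eventually_gt_atTop 0] with x hx
  field_simp

lemma auxD (xs d e : ℝ) :
    Tendsto (fun x : ℝ => (d*(x-xs) + e)/x) atTop (nhds d) := by
  have h1 := ratio_one xs
  have h2 : Tendsto (fun x : ℝ => x⁻¹) atTop (nhds 0) := tendsto_inv_atTop_zero
  have h : Tendsto (fun x : ℝ => d*((x-xs)/x) + e*x⁻¹) atTop (nhds (d*1 + e*0)) :=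
    (h1.const_mul d).add (h2.const_mul e)
  norm_num at h
  refine h.congr' ?_
  filter_upwards [eventually_gt_atTop 0] with x hx
  field_simp

theorem stmt_13 (xs bs beta A rho u v : ℝ)
    (hbs : 0 < bs) (hbeta : 0 ≤ beta) (hA : 0 < A)
    (hrho : 0 < rho) (hu : 0 < u) (hv : 0 < v)
    (hru : rho * u^2 = 1) (hslope : beta ≤ v/u) :
    let s : ℝ → ℝ := fun x =>
      (rho*v^2*(x-xs)^2 + 2*(rho*u*v*bs + beta*A)*(x-xs) + 2*bs*A) /
        (2*rho*u*v*(x-xs) + 2*A)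
    (∀ x ≥ xs, 0 ≤ deriv s x ∧ deriv s x ≤ v/u) ∧
    Filter.Tendsto (fun x => s x / x) Filter.atTop (nhds (v/(2*u))) := by
  intro s
  have hbu : beta * u ≤ v := by
    rw [le_div_iff₀ hu] at hslope; linarith
  constructor
  · intro x hx
    have ht : 0 ≤ x - xs := by linarith
    have hden : 0 < 2*rho*u*v*(x-xs) + 2*A := by
      have : 0 ≤ 2*rho*u*v*(x-xs) := by positivity
      linarith
    have h1 : HasDerivAt (fun y : ℝ => y - xs) 1 x := (hasDerivAt_id x).sub_const xs
    have hN : HasDerivAt (fun y => rho*v^2*(y-xs)^2 + 2*(rho*u*v*bs + beta*A)*(y-xs) + 2*bs*A)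
        (rho*v^2*(2*(x-xs)) + 2*(rho*u*v*bs + beta*A)) x := by
      have := (((h1.pow 2).const_mul (rho*v^2)).add
        (h1.const_mul (2*(rho*u*v*bs + beta*A)))).add_const (2*bs*A)
      refine this.congr_deriv ?_
      ring
    have hD : HasDerivAt (fun y => 2*rho*u*v*(y-xs) + 2*A) (2*rho*u*v) x := by
      have := (h1.const_mul (2*rho*u*v)).add_const (2*A)
      refine this.congr_deriv ?_
      ring
    have key : HasDerivAt s
        (((rho*v^2*(2*(x-xs)) + 2*(rho*u*v*bs + beta*A)) * (2*rho*u*v*(x-xs) + 2*A) -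
          (rho*v^2*(x-xs)^2 + 2*(rho*u*v*bs + beta*A)*(x-xs) + 2*bs*A) * (2*rho*u*v)) /
          (2*rho*u*v*(x-xs) + 2*A)^2) x := hN.div hD (ne_of_gt hden)
    rw [key.deriv]
    constructor
    · apply div_nonneg _ (sq_nonneg _)
      nlinarith [sq_nonneg (x-xs), mul_nonneg (mul_nonneg hrho.le hv.le) hv.le,
        mul_pos hrho hv, mul_pos hu hv, mul_nonneg hbeta (mul_pos hA hA).le,
        mul_nonneg (mul_nonneg (mul_nonneg (mul_nonneg hrho.le hu.le) hv.le) hv.le) (sq_nonneg (x-xs)),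
        mul_nonneg (mul_nonneg (mul_nonneg hrho.le hv.le) hv.le) (mul_nonneg hA.le ht)]
    · rw [div_le_div_iff₀ (by positivity) hu]
      nlinarith [mul_nonneg (mul_nonneg (mul_nonneg (mul_nonneg (mul_nonneg hrho.le hrho.le) hu.le) hu.le) (mul_nonneg hv.le (mul_nonneg hv.le hv.le))) (sq_nonneg (x-xs)),
        mul_nonneg (mul_nonneg (mul_nonneg (mul_nonneg hrho.le hu.le) (mul_nonneg hv.le hv.le)) hA.le) ht,
        mul_nonneg (mul_nonneg hA.le hA.le) (sub_nonneg.mpr hbu)]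
  · have hN := auxN xs (rho*v^2) (2*(rho*u*v*bs + beta*A)) (2*bs*A)
    have hD := auxD xs (2*rho*u*v) (2*A)
    have hd0 : (2*rho*u*v : ℝ) ≠ 0 := by positivity
    have h := hN.div hD hd0
    have hlim : rho*v^2 / (2*rho*u*v) = v/(2*u) := by
      field_simp
    rw [hlim] at h
    refine h.congr' ?_
    filter_upwards [eventually_gt_atTop (max xs 0)] with x hx
    have hx0 : 0 < x := lt_of_le_of_lt (le_max_right _ _) hx
    have hxs : xs < x := lt_of_le_of_lt (le_max_left _ _) hx
    have hden : 2*rho*u*v*(x-xs) + 2*A ≠ 0 := by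
      have h0 : 0 ≤ 2*rho*u*v*(x-xs) := mul_nonneg (by positivity) (by linarith)
      exact ne_of_gt (by linarith)
    show _ = s x / x
    simp only [s, Pi.div_apply]
    field_simp
end

section
/- Let x* ∈ ℝ, b* > 0, β ≥ 0, A > 0, and ρ̲, u̲, v̲ > 0 with ρ̲u̲² ≠ 1 and v̲/u̲ ≥ β. Define ♠(x) = ρ̲v̲²(x−x*)² + 2[ρ̲u̲v̲ + (1−ρ̲u̲²)β]·A·(x−x*) + A². Then ♠(x) > 0 for all x ≥ x*, and the function s(x) = b* − [ρ̲u̲v̲(x−x*) + A]/(1−ρ̲u̲²) + √♠(x)/(1−ρ̲u̲²) satisfies s(x*) = b* and solves the ODE ρ̲v̲²(x−x*) − ρ̲u̲v̲(s(x)−b*) + βA = s'(x)·[ρ̲u̲v̲(x−x*) + (1−ρ̲u̲²)(s(x)−b*) + A] on [x*, ∞). -/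
theorem stmt_14 (xs bs beta A rho u v : ℝ)
    (hbs : 0 < bs) (hbeta : 0 ≤ beta) (hA : 0 < A)
    (hrho : 0 < rho) (hu : 0 < u) (hv : 0 < v)
    (hru : rho * u^2 ≠ 1) (hslope : beta ≤ v/u) :
    let spade : ℝ → ℝ := fun x =>
      rho*v^2*(x-xs)^2 + 2*(rho*u*v + (1 - rho*u^2)*beta)*A*(x-xs) + A^2
    let s : ℝ → ℝ := fun x =>
      bs - (rho*u*v*(x-xs) + A)/(1 - rho*u^2) + Real.sqrt (spade x)/(1 - rho*u^2)
    (∀ x ≥ xs, 0 < spade x) ∧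
    s xs = bs ∧
    (∀ x ≥ xs, ∃ d : ℝ, HasDerivAt s d x ∧
      rho*v^2*(x-xs) - rho*u*v*(s x - bs) + beta*A
        = d * (rho*u*v*(x-xs) + (1 - rho*u^2)*(s x - bs) + A)) := by
  intro spade s
  have hc : 0 ≤ rho*u*v + (1 - rho*u^2)*beta := by
    have h1 : u * beta ≤ v := by
      rw [le_div_iff₀ hu] at hslope
      linarith [hslope]
    have : rho*u*v + (1 - rho*u^2)*beta = rho*u*(v - u*beta) + beta := by ring
    rw [this]
    have := mul_nonneg (mul_nonneg hrho.le hu.le) (by linarith : (0:ℝ) ≤ v - u*beta)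
    linarith
  have hpos : ∀ x ≥ xs, 0 < spade x := by
    intro x hx
    have ht : 0 ≤ x - xs := by linarith
    have h1 : 0 ≤ rho*v^2*(x-xs)^2 := by positivity
    have h2 : 0 ≤ 2*(rho*u*v + (1 - rho*u^2)*beta)*A*(x-xs) := by
      have := mul_nonneg (mul_nonneg (mul_nonneg (by norm_num : (0:ℝ) ≤ 2) hc) hA.le) ht
      linarith
    have h3 : 0 < A^2 := by positivity
    show 0 < rho*v^2*(x-xs)^2 + 2*(rho*u*v + (1 - rho*u^2)*beta)*A*(x-xs) + A^2
    linarith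
  have hne : (1 - rho*u^2) ≠ 0 := by
    intro h
    apply hru
    linarith
  refine ⟨hpos, ?_, ?_⟩
  · show bs - (rho*u*v*(xs-xs) + A)/(1 - rho*u^2) + Real.sqrt (spade xs)/(1 - rho*u^2) = bs
    have : spade xs = A^2 := by
      show rho*v^2*(xs-xs)^2 + 2*(rho*u*v + (1 - rho*u^2)*beta)*A*(xs-xs) + A^2 = A^2
      ring
    rw [this, Real.sqrt_sq hA.le]
    field_simp
    ring
  · intro x hx
    have hsx := hpos x hx
    set S := Real.sqrt (spade x) with hSdef
    have hSpos : 0 < S := Real.sqrt_pos.mpr hsx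
    have hS2 : S^2 = spade x := Real.sq_sqrt hsx.le
    -- derivative of spade
    have hid : HasDerivAt (fun y : ℝ => y - xs) 1 x := (hasDerivAt_id x).sub_const xs
    have hspade : HasDerivAt spade
        (rho*v^2*(2*(x-xs)) + 2*(rho*u*v + (1 - rho*u^2)*beta)*A) x := by
      have h1 : HasDerivAt (fun y : ℝ => rho*v^2*(y-xs)^2) (rho*v^2*(2*(x-xs)^1*1)) x :=
        (hid.pow 2).const_mul (rho*v^2)
      have h2 : HasDerivAt (fun y : ℝ => 2*(rho*u*v + (1 - rho*u^2)*beta)*A*(y-xs))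
          (2*(rho*u*v + (1 - rho*u^2)*beta)*A*1) x := hid.const_mul _
      have := (h1.add h2).add_const (A^2)
      exact this.congr_deriv (by ring)
    have hsqrt : HasDerivAt (fun y => Real.sqrt (spade y))
        (1/(2*S) * (rho*v^2*(2*(x-xs)) + 2*(rho*u*v + (1 - rho*u^2)*beta)*A)) x :=
      (Real.hasDerivAt_sqrt hsx.ne').comp x hspade
    have hlin : HasDerivAt (fun y : ℝ => bs - (rho*u*v*(y-xs) + A)/(1 - rho*u^2))
        (-(rho*u*v*1/(1 - rho*u^2))) x := by
      have h1 : HasDerivAt (fun y : ℝ => rho*u*v*(y-xs)) (rho*u*v*1) x := hid.const_mul _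
      have := ((h1.add_const A).div_const (1 - rho*u^2)).const_sub bs
      convert this using 1
    set d : ℝ := -(rho*u*v*1/(1 - rho*u^2)) +
        1/(2*S) * (rho*v^2*(2*(x-xs)) + 2*(rho*u*v + (1 - rho*u^2)*beta)*A) / (1 - rho*u^2)
      with hd
    refine ⟨d, ?_, ?_⟩
    · exact hlin.add (hsqrt.div_const _)
    · show rho*v^2*(x-xs) - rho*u*v*((bs - (rho*u*v*(x-xs) + A)/(1 - rho*u^2) + S/(1 - rho*u^2)) - bs) + beta*A
        = d * (rho*u*v*(x-xs) + (1 - rho*u^2)*((bs - (rho*u*v*(x-xs) + A)/(1 - rho*u^2) + S/(1 - rho*u^2)) - bs) + A)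
      rw [hd]
      have hS2' : S*S = rho*v^2*(x-xs)^2 + 2*(rho*u*v + (1 - rho*u^2)*beta)*A*(x-xs) + A^2 := by
        have : S^2 = rho*v^2*(x-xs)^2 + 2*(rho*u*v + (1 - rho*u^2)*beta)*A*(x-xs) + A^2 := hS2
        nlinarith [this]
      field_simp
      ring_nf
end

section
/- Under the assumptions of the previous statement (ρ̲u̲² ≠ 1, u̲, v̲ > 0, v̲/u̲ ≥ β ≥ 0, A > 0), the solution s satisfies ρ̲u̲v̲(x−x*) + (1−ρ̲u̲²)(s(x)−b*) + A = √♠(x) > 0 for all x ≥ x*, and s(x)/x → √ρ̲·v̲/(1 + √ρ̲·u̲) as x → ∞. -/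
open Filter Real

theorem stmt_15 (xs bs beta A rho u v : ℝ)
    (hbs : 0 < bs) (hbeta : 0 ≤ beta) (hA : 0 < A)
    (hrho : 0 < rho) (hu : 0 < u) (hv : 0 < v)
    (hru : rho * u^2 ≠ 1) (hslope : beta ≤ v/u) :
    let spade : ℝ → ℝ := fun x =>
      rho*v^2*(x-xs)^2 + 2*(rho*u*v + (1 - rho*u^2)*beta)*A*(x-xs) + A^2
    let s : ℝ → ℝ := fun x =>
      bs - (rho*u*v*(x-xs) + A)/(1 - rho*u^2) + Real.sqrt (spade x)/(1 - rho*u^2)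
    (∀ x ≥ xs,
      rho*u*v*(x-xs) + (1 - rho*u^2)*(s x - bs) + A = Real.sqrt (spade x) ∧
      0 < Real.sqrt (spade x)) ∧
    Filter.Tendsto (fun x => s x / x) Filter.atTop
      (nhds (Real.sqrt rho * v / (1 + Real.sqrt rho * u))) := by
  intro spade s
  have hc2 : Real.sqrt rho ^ 2 = rho := Real.sq_sqrt hrho.le
  have hc0 : 0 < Real.sqrt rho := Real.sqrt_pos.mpr hrho
  set c := Real.sqrt rho with hc
  have hd : 1 - rho*u^2 ≠ 0 := by intro h; apply hru; linarith
  have hK : 0 < rho*u*v + (1 - rho*u^2)*beta := by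
    rcases le_or_gt (1 - rho*u^2) 0 with h | h
    · have h2 : (1 - rho*u^2)*(v/u) ≤ (1 - rho*u^2)*beta :=
        mul_le_mul_of_nonpos_left hslope h
      have h3 : (1 - rho*u^2)*(v/u) = v/u - rho*u*v := by field_simp
      have hvu : 0 < v/u := div_pos hv hu
      nlinarith
    · nlinarith [mul_nonneg h.le hbeta, mul_pos (mul_pos hrho hu) hv]
  have hspade : ∀ x, xs ≤ x → A^2 ≤ spade x := by
    intro x hx
    have ht : 0 ≤ x - xs := by linarith
    simp only [spade]
    nlinarith [mul_nonneg (mul_nonneg hrho.le (sq_nonneg v)) (sq_nonneg (x-xs)),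
      mul_nonneg (mul_nonneg hK.le hA.le) ht]
  constructor
  · intro x hx
    have h1 : 0 < spade x := lt_of_lt_of_le (by positivity) (hspade x hx)
    refine ⟨?_, Real.sqrt_pos.mpr h1⟩
    simp only [s]
    field_simp
    ring
  · have hinv : Tendsto (fun x:ℝ => x⁻¹) atTop (nhds 0) := tendsto_inv_atTop_zero
    have hp : Tendsto (fun x:ℝ => 1 - xs * x⁻¹) atTop (nhds 1) := by
      have := tendsto_const_nhds (α := ℝ) (x := (1:ℝ)) (f := atTop)
      simpa using this.sub (hinv.const_mul xs)
    set K := rho*u*v + (1 - rho*u^2)*beta with hKdef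
    set e : ℝ → ℝ := fun x => rho*v^2*(1 - xs*x⁻¹)^2 + 2*K*A*((1 - xs*x⁻¹)*x⁻¹) + A^2*(x⁻¹)^2 with he
    have hh : Tendsto e atTop (nhds (rho*v^2)) := by
      have h0 : (rho*v^2*1^2 + 2*K*A*(1*0) + A^2*0^2) = rho*v^2 := by ring
      rw [← h0]
      exact ((tendsto_const_nhds.mul (hp.pow 2)).add
        (tendsto_const_nhds.mul (hp.mul hinv))).add (tendsto_const_nhds.mul (hinv.pow 2))
    have hsq : Tendsto (fun x => Real.sqrt (e x)) atTop (nhds (c*v)) := by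
      have hcv : Real.sqrt (rho*v^2) = c*v := by
        rw [Real.sqrt_mul hrho.le, Real.sqrt_sq hv.le]
      rw [← hcv]
      exact hh.sqrt
    have hG : Tendsto (fun x => bs*x⁻¹ +
        (Real.sqrt (e x) - rho*u*v*(1 - xs*x⁻¹) - A*x⁻¹)/(1 - rho*u^2)) atTop
        (nhds (bs*0 + (c*v - rho*u*v*1 - A*0)/(1 - rho*u^2))) :=
      (hinv.const_mul bs).add
        (((hsq.sub (hp.const_mul (rho*u*v))).sub (hinv.const_mul A)).div_const _)
    have hval : bs*0 + (c*v - rho*u*v*1 - A*0)/(1 - rho*u^2) = c*v/(1 + c*u) := by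
      have hne : (1 + c*u) ≠ 0 := by positivity
      field_simp
      linear_combination u*v*hc2
    rw [hval] at hG
    refine hG.congr' ?_
    filter_upwards [eventually_gt_atTop (max xs 0)] with x hx
    have hx0 : 0 < x := lt_of_le_of_lt (le_max_right _ _) hx
    have hxs : xs ≤ x := le_of_lt (lt_of_le_of_lt (le_max_left _ _) hx)
    have hsp0 : 0 ≤ spade x := le_trans (by positivity) (hspade x hxs)
    have hex : e x = spade x * (x⁻¹)^2 := by
      simp only [he, spade, hKdef]
      field_simp
    have hesqrt : Real.sqrt (e x) = Real.sqrt (spade x) * x⁻¹ := by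
      rw [hex, Real.sqrt_mul hsp0, Real.sqrt_sq (by positivity)]
    rw [hesqrt]
    simp only [s]
    field_simp
    ring
end

section
/- With b* > 0, β > 0, A > 0, u̲, v̲ > 0, v̲/u̲ < β, x△ = x* + 2(u̲β − v̲)u̲A/v̲², and h(x) = √(2Aβ(x−x*) + A²) + b* − A, one has h'(x△) = βv̲/(2u̲β − v̲), and moreover h'(x△) ≤ v̲/u̲. -/
theorem stmt_18 (xs bs beta A u v : ℝ)
    (hbs : 0 < bs) (hbeta : 0 < beta) (hA : 0 < A)
    (hu : 0 < u) (hv : 0 < v) (hslope : v/u < beta) :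
    let h : ℝ → ℝ := fun x => Real.sqrt (2*A*beta*(x-xs) + A^2) + bs - A
    let xd : ℝ := xs + 2*(u*beta - v)*u*A/v^2
    HasDerivAt h (beta*v/(2*u*beta - v)) xd ∧
    beta*v/(2*u*beta - v) ≤ v/u := by
  intro h xd
  have hvu : v < u * beta := by
    have := (div_lt_iff₀ hu).mp hslope
    linarith [this]
  have hpos : (0:ℝ) < 2*u*beta - v := by nlinarith
  have hg : HasDerivAt (fun x => 2*A*beta*(x-xs) + A^2) (2*A*beta) xd := by
    have : HasDerivAt (fun x : ℝ => x - xs) 1 xd := (hasDerivAt_id xd).sub_const xs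
    simpa using (this.const_mul (2*A*beta)).add_const (A^2)
  have hval : 2*A*beta*(xd-xs) + A^2 = (A*(2*u*beta - v)/v)^2 := by
    show 2*A*beta*((xs + 2*(u*beta - v)*u*A/v^2)-xs) + A^2 = _
    field_simp
    ring
  have hsq : Real.sqrt (2*A*beta*(xd-xs) + A^2) = A*(2*u*beta - v)/v := by
    rw [hval, Real.sqrt_sq (by positivity)]
  have hne : 2*A*beta*(xd-xs) + A^2 ≠ 0 := by
    rw [hval]; positivity
  have hd := hg.sqrt hne
  constructor
  · have : (2*A*beta) / (2 * Real.sqrt (2*A*beta*(xd-xs) + A^2)) = beta*v/(2*u*beta - v) := by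
      rw [hsq]; field_simp
    have hd' : HasDerivAt (fun x => Real.sqrt (2*A*beta*(x-xs) + A^2)) (beta*v/(2*u*beta - v)) xd := this ▸ hd
    simpa [h] using (hd'.add_const bs).sub_const A
  · rw [div_le_div_iff₀ hpos hu]
    nlinarith
end

section
/- Let x* ∈ ℝ, b* > 0, β ≥ 0, A > 0 and p ∈ (0,1). With s(x) = √Δ(x)/(1−p) + b* − A/(1−p) where Δ(x) = (1−p)p(x−x*)² + 2(1−p)Aβ(x−x*) + A², one has s'(x) ≥ 0 for all x ≥ x*, and the quantity (1−p)(s(x) − b*) + A = √Δ(x) is strictly positive for all x ≥ x*; consequently the weight w(x) = s(x)² / ( √(1+s'(x)²) · [(1−p)(s(x)−b*) + A] ) is well-defined and strictly positive on [x*, ∞). -/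
theorem stmt_19 (xs bs beta A p : ℝ)
    (hbs : 0 < bs) (hbeta : 0 ≤ beta) (hA : 0 < A)
    (hp : p ∈ Set.Ioo (0:ℝ) 1) :
    let Δ : ℝ → ℝ := fun x => (1-p)*p*(x-xs)^2 + 2*(1-p)*A*beta*(x-xs) + A^2
    let s : ℝ → ℝ := fun x => Real.sqrt (Δ x) / (1-p) + bs - A/(1-p)
    ∀ x ≥ xs,
      0 ≤ deriv s x ∧
      (1-p)*(s x - bs) + A = Real.sqrt (Δ x) ∧
      0 < Real.sqrt (Δ x) ∧
      0 < s x ^ 2 / (Real.sqrt (1 + (deriv s x)^2) * ((1-p)*(s x - bs) + A)) := by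
  intro Δ s x hx
  obtain ⟨hp0, hp1⟩ := hp
  have h1p : (0:ℝ) < 1 - p := by linarith
  have hxm : 0 ≤ x - xs := by linarith
  -- Δ x ≥ A^2 > 0
  have hΔge : A^2 ≤ Δ x := by
    have : 0 ≤ (1-p)*p*(x-xs)^2 + 2*(1-p)*A*beta*(x-xs) := by positivity
    simp only [Δ]; linarith
  have hΔpos : 0 < Δ x := lt_of_lt_of_le (by positivity) hΔge
  have hsqrtpos : 0 < Real.sqrt (Δ x) := Real.sqrt_pos.mpr hΔpos
  have hsqrtA : A ≤ Real.sqrt (Δ x) := by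
    have := Real.sqrt_le_sqrt hΔge
    rwa [Real.sqrt_sq hA.le] at this
  -- derivative
  have hx1 : HasDerivAt (fun y : ℝ => y - xs) 1 x := (hasDerivAt_id x).sub_const xs
  have h2 : HasDerivAt (fun y : ℝ => (y - xs)^2) (2*(x-xs)) x := by
    simpa using hx1.fun_pow 2
  have hΔd : HasDerivAt Δ ((1-p)*p*(2*(x-xs)) + 2*(1-p)*A*beta*1) x := by
    exact ((h2.const_mul ((1-p)*p)).add (hx1.const_mul (2*(1-p)*A*beta))).add_const (A^2)
  have hsq : HasDerivAt (fun y => Real.sqrt (Δ y))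
      (((1-p)*p*(2*(x-xs)) + 2*(1-p)*A*beta*1) / (2 * Real.sqrt (Δ x))) x :=
    hΔd.sqrt (ne_of_gt hΔpos)
  have hs : HasDerivAt s
      ((((1-p)*p*(2*(x-xs)) + 2*(1-p)*A*beta*1) / (2 * Real.sqrt (Δ x))) / (1-p)) x :=
    ((hsq.div_const (1-p)).add_const bs).sub_const (A/(1-p))
  have hderiv : deriv s x = (((1-p)*p*(2*(x-xs)) + 2*(1-p)*A*beta*1) / (2 * Real.sqrt (Δ x))) / (1-p) :=
    hs.deriv
  have hd0 : 0 ≤ deriv s x := by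
    rw [hderiv]
    positivity
  -- the algebraic identity
  have hkey : (1-p)*(s x - bs) + A = Real.sqrt (Δ x) := by
    simp only [s]
    field_simp
    ring
  refine ⟨hd0, hkey, hsqrtpos, ?_⟩
  have hspos : 0 < s x := by
    have : A / (1-p) ≤ Real.sqrt (Δ x) / (1-p) := by
      exact div_le_div_of_nonneg_right hsqrtA h1p.le
    simp only [s]
    nlinarith [this]
  rw [hkey]
  have hden : 0 < Real.sqrt (1 + (deriv s x)^2) := Real.sqrt_pos.mpr (by positivity)
  positivity
end
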